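/- (Lemma 1, quadratic part.) Let τ be a tracial functional on A and let b ∈ Aⁿ be divergence-free for τ. Then for every a = (a₁,…,aₙ) ∈ Aⁿ one has Σ_{j=1}^n τ((D_b a_j)·a_j) = 0. -/
import Mathlib

open scoped TensorProduct

noncomputable section

/-- The free algebra `A = ℂ⟨X₁,…,Xₙ⟩` on `n` generators. -/
abbrev FA (n : ℕ) := FreeAlgebra ℂ (Fin n)

/-- The generator `X i`. -/
def X {n : ℕ} (i : Fin n) : FA n := FreeAlgebra.ι ℂ i

/-- The monomial `X_{i₁} ⋯ X_{i_m}` associated to a list of indices. -/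
def mono {n : ℕ} (l : List (Fin n)) : FA n := (l.map X).prod

lemma mono_nil {n : ℕ} : mono ([] : List (Fin n)) = 1 := rfl

lemma mono_append {n : ℕ} (l₁ l₂ : List (Fin n)) :
    mono (l₁ ++ l₂) = mono l₁ * mono l₂ := by
  simp [mono]

lemma mono_singleton {n : ℕ} (i : Fin n) : mono [i] = X i := by
  simp [mono]

lemma mul_mem_span_mono {n : ℕ} {x y : FA n}
    (hx : x ∈ Submodule.span ℂ (Set.range (mono (n := n))))
    (hy : y ∈ Submodule.span ℂ (Set.range (mono (n := n)))) :
    x * y ∈ Submodule.span ℂ (Set.range (mono (n := n))) := by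
  induction hx using Submodule.span_induction with
  | mem z hz =>
    induction hy using Submodule.span_induction with
    | mem w hw =>
      obtain ⟨l₁, rfl⟩ := hz
      obtain ⟨l₂, rfl⟩ := hw
      exact Submodule.subset_span ⟨l₁ ++ l₂, mono_append l₁ l₂⟩
    | zero => simp
    | add u v _ _ hu hv => rw [mul_add]; exact add_mem hu hv
    | smul c u _ hu => rw [mul_smul_comm]; exact Submodule.smul_mem _ _ hu
  | zero => simp
  | add u v _ _ hu hv => rw [add_mul]; exact add_mem hu hv
  | smul c u _ hu => rw [smul_mul_assoc]; exact Submodule.smul_mem _ _ hu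

lemma span_mono_top {n : ℕ} :
    Submodule.span ℂ (Set.range (mono (n := n))) = ⊤ := by
  rw [eq_top_iff]
  rintro x -
  induction x using FreeAlgebra.induction with
  | grade0 r =>
    have : (algebraMap ℂ (FA n)) r = r • mono [] := by
      simp [mono_nil, Algebra.smul_def]
    rw [this]
    exact Submodule.smul_mem _ _ (Submodule.subset_span ⟨[], rfl⟩)
  | grade1 i => exact Submodule.subset_span ⟨[i], mono_singleton i⟩
  | add x y hx hy => exact add_mem hx hy
  | mul x y hx hy => exact mul_mem_span_mono hx hy

/-- Lemma 1, quadratic part: if `b ∈ Aⁿ` is divergence-free for a tracial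
functional `τ`, then `Σ_j τ((D_b a_j)·a_j) = 0` for every `a ∈ Aⁿ`. -/
theorem stmt18 {n : ℕ} (hn : 1 ≤ n)
    (τ : FA n →ₗ[ℂ] ℂ) (htr : ∀ P Q : FA n, τ (P * Q) = τ (Q * P))
    (δ : Fin n → (FA n →ₗ[ℂ] FA n))
    (hδ : ∀ (j : Fin n) (l : List (Fin n)),
      δ j (mono l) = ∑ k : Fin l.length,
        if l.get k = j then mono (l.drop (k.val + 1)) * mono (l.take k.val) else 0)
    (b : Fin n → FA n)
    (Db : FA n →ₗ[ℂ] FA n)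
    (hDb : ∀ l : List (Fin n),
      Db (mono l) = ∑ k : Fin l.length,
        mono (l.take k.val) * b (l.get k) * mono (l.drop (k.val + 1)))
    (hb : ∀ R : FA n, ∑ j : Fin n, τ (b j * δ j R) = 0)
    (a : Fin n → FA n) :
    ∑ j : Fin n, τ (Db (a j) * a j) = 0 := by
  -- cyclicity helper
  have cyc : ∀ u v w : FA n, τ (u * v * w) = τ (v * (w * u)) := by
    intro u v w
    rw [htr (u * v) w, ← mul_assoc, htr (w * u) v]
  -- Step A : τ ∘ Db = ∑ⱼ τ(bⱼ · δⱼ ·)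
  have hDτ : ∀ R : FA n, τ (Db R) = ∑ j : Fin n, τ (b j * δ j R) := by
    have hmaps :
        (τ ∘ₗ Db) = ∑ j : Fin n, τ ∘ₗ (LinearMap.mulLeft ℂ (b j)) ∘ₗ δ j := by
      apply LinearMap.ext_on (span_mono_top (n := n))
      rintro _ ⟨l, rfl⟩
      simp only [LinearMap.comp_apply, LinearMap.sum_apply, LinearMap.mulLeft_apply]
      rw [hDb l, map_sum]
      have : ∀ j : Fin n, τ (b j * δ j (mono l)) =
          ∑ k : Fin l.length,
            if l.get k = j then
              τ (b j * (mono (l.drop (k.val + 1)) * mono (l.take k.val))) else 0 := by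
        intro j
        rw [hδ j l, Finset.mul_sum, map_sum]
        congr 1; funext k
        split <;> simp
      rw [Finset.sum_congr rfl fun j _ => this j, Finset.sum_comm]
      refine Finset.sum_congr rfl fun k _ => ?_
      rw [Finset.sum_ite_eq (Finset.univ) (l.get k)
        (fun j => τ (b j * (mono (l.drop (k.val + 1)) * mono (l.take k.val))))]
      simp [cyc]
    intro R
    have := congrFun (congrArg (fun f => f.toFun) hmaps) R
    simpa using this
  have key : ∀ R : FA n, τ (Db R) = 0 := fun R => (hDτ R).trans (hb R)
  -- Db on scalars and generators
  have hDb1 : Db 1 = 0 := by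
    have := hDb []
    simpa [mono_nil] using this
  have hDbX : ∀ i : Fin n, Db (X i) = b i := by
    intro i
    have := hDb [i]
    simpa [mono_singleton, mono_nil] using this
  -- Step B : Db is a derivation.  First: right multiplication by a generator.
  have hstep : ∀ (i : Fin n) (P : FA n), Db (P * X i) = Db P * X i + P * b i := by
    intro i
    have : (Db ∘ₗ LinearMap.mulRight ℂ (X i)) =
        (LinearMap.mulRight ℂ (X i)) ∘ₗ Db + LinearMap.mulRight ℂ (b i) := by
      apply LinearMap.ext_on (span_mono_top (n := n))
      rintro _ ⟨l, rfl⟩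
      simp only [LinearMap.comp_apply, LinearMap.add_apply, LinearMap.mulRight_apply]
      rw [← mono_singleton, ← mono_append, hDb (l ++ [i]), hDb l]
      have hlen : (l ++ [i]).length = l.length + 1 := by simp
      rw [show (∑ k : Fin (l ++ [i]).length,
            mono ((l ++ [i]).take k.val) * b ((l ++ [i]).get k) *
              mono ((l ++ [i]).drop (k.val + 1)))
          = ∑ k : Fin (l.length + 1),
            mono ((l ++ [i]).take k.val) * b ((l ++ [i]).get (Fin.cast hlen.symm k)) *
              mono ((l ++ [i]).drop (k.val + 1)) from
        Finset.sum_equiv (finCongr hlen) (by simp) (fun k _ => by simp [finCongr])]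
      rw [Fin.sum_univ_castSucc]
      congr 1
      · rw [Finset.sum_mul]
        refine Finset.sum_congr rfl fun j _ => ?_
        have h1 : j.val ≤ l.length := le_of_lt j.isLt
        have h2 : j.val + 1 ≤ l.length := j.isLt
        simp only [Fin.coe_castSucc, List.get_eq_getElem, Fin.coe_cast]
        rw [List.take_append_of_le_length h1, List.drop_append_of_le_length h2,
          List.getElem_append_left j.isLt, mono_append, ← mul_assoc]
      · have h1 : (l ++ [i]).take l.length = l := by
          simp [List.take_left]
        have h2 : (l ++ [i]).drop (l.length + 1) = [] := by simp
        have h3 : (l ++ [i]).get (Fin.cast hlen.symm (Fin.last l.length)) = i := by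
          rw [List.get_eq_getElem]
          simp [List.getElem_append_right]
        simp [h1, h2, h3, mono_nil]
    intro P
    have := congrFun (congrArg (fun f => f.toFun) this) P
    simpa using this
  have hder : ∀ Q P : FA n, Db (P * Q) = Db P * Q + P * Db Q := by
    intro Q
    induction Q using FreeAlgebra.induction with
    | grade0 r =>
      intro P
      have h1 : P * (algebraMap ℂ (FA n)) r = r • P := by
        rw [Algebra.smul_def, Algebra.commutes]
      have h2 : (algebraMap ℂ (FA n)) r = r • (1 : FA n) := by
        rw [Algebra.smul_def, mul_one]
      rw [h1, map_smul, h2, map_smul, hDb1, smul_zero, mul_zero, add_zero,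
        mul_smul_comm, mul_one]
    | grade1 i =>
      intro P
      show Db (P * X i) = Db P * X i + P * Db (X i)
      rw [hstep i P, hDbX i]
    | add x y hx hy =>
      intro P
      rw [mul_add, map_add, hx P, hy P, map_add, mul_add]
      noncomm_ring
    | mul x y hx hy =>
      intro P
      rw [← mul_assoc, hy (P * x), hx P, hy x]
      noncomm_ring
  -- conclude
  have hzero : ∀ j : Fin n, τ (Db (a j) * a j) = 0 := by
    intro j
    have h1 := key (a j * a j)
    rw [hder (a j) (a j), map_add, htr (a j) (Db (a j))] at h1
    have : (2 : ℂ) * τ (Db (a j) * a j) = 0 := by linear_combination h1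
    have h2 : (2 : ℂ) ≠ 0 := two_ne_zero
    exact (mul_eq_zero.mp this).resolve_left h2
  simp [hzero]
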